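/- Let λ_1, …, λ_n be pairwise distinct real numbers and define q_i = (-1)^i σ_i(λ). The Jacobian matrix J_V of the map λ ↦ (q_1, …, q_n), with entries (J_V)_{ij} = ∂ρ_i/∂λ_j where ρ_i = (-1)^i σ_i, is invertible, and its inverse has entries (J_V^{-1})_{ij} = -λ_i^{n-j}/Δ_i, where Δ_i = ∏_{k≠i}(λ_i - λ_k). -/

import Mathlib

open Finset

/-- The `i`-th elementary symmetric polynomial `σ_i(λ₁,…,λ_n)`. -/
noncomputable def esymmF (n i : ℕ) (l : Fin n → ℝ) : ℝ :=
  ∑ s ∈ Finset.powersetCard i Finset.univ, ∏ j ∈ s, l j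

/-- `ρ_i = (-1)^i σ_i(λ)`. -/
noncomputable def rho (n i : ℕ) (l : Fin n → ℝ) : ℝ :=
  (-1) ^ i * esymmF n i l

/-- Partial derivative `∂f/∂λ_j` evaluated at `l`. -/
noncomputable def pd (n : ℕ) (f : (Fin n → ℝ) → ℝ) (l : Fin n → ℝ) (j : Fin n) : ℝ :=
  deriv (fun t => f (Function.update l j t)) (l j)

/-- `Δ_j = ∏_{k≠j} (λ_j - λ_k)`. -/
noncomputable def Delta (n : ℕ) (l : Fin n → ℝ) (j : Fin n) : ℝ :=
  ∏ k ∈ Finset.univ.erase j, (l j - l k)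

/-- `e_i` of the variables other than `j`. -/
noncomputable def Esub (n i : ℕ) (l : Fin n → ℝ) (j : Fin n) : ℝ :=
  ∑ s ∈ Finset.powersetCard i (Finset.univ.erase j), ∏ m ∈ s, l m

lemma pd_rho (n i : ℕ) (l : Fin n → ℝ) (j : Fin n) :
    pd n (rho n (i + 1)) l j = (-1) ^ (i + 1) * Esub n i l j := by
  set c0 : ℝ :=
    ∑ s ∈ (Finset.powersetCard (i+1) (Finset.univ : Finset (Fin n))).filter (fun s => j ∉ s),
      ∏ m ∈ s, l m with hc0
  have hfun : (fun t => (∑ s ∈ Finset.powersetCard (i+1) (Finset.univ : Finset (Fin n)),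
      ∏ m ∈ s, Function.update l j t m)) =
      fun t => Esub n i l j * t + c0 := by
    funext t
    rw [← Finset.sum_filter_add_sum_filter_not _ (fun s => j ∈ s)]
    congr 1
    · rw [Esub, Finset.sum_mul]
      refine Finset.sum_nbij' (fun s => s.erase j) (fun s => insert j s) ?_ ?_ ?_ ?_ ?_
      · intro s hs
        simp only [mem_filter, mem_powersetCard] at hs ⊢
        refine ⟨fun a ha => ?_, ?_⟩
        · simp only [mem_erase] at ha ⊢; exact ⟨ha.1, mem_univ _⟩
        · rw [Finset.card_erase_of_mem hs.2, hs.1.2]; rfl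
      · intro s hs
        simp only [mem_powersetCard, mem_filter] at hs ⊢
        have hj : j ∉ s := fun h => by
          have := hs.1 h; simp [Finset.mem_erase] at this
        refine ⟨⟨fun a _ => mem_univ _, ?_⟩, mem_insert_self _ _⟩
        rw [Finset.card_insert_of_notMem hj, hs.2]
      · intro s hs
        simp only [mem_filter] at hs
        exact Finset.insert_erase hs.2
      · intro s hs
        simp only [mem_powersetCard] at hs
        have hj : j ∉ s := fun h => by
          have := hs.1 h; simp [Finset.mem_erase] at this
        exact Finset.erase_insert hj
      · intro s hs
        simp only [mem_filter] at hs
        rw [← Finset.mul_prod_erase s _ hs.2, Function.update_self, mul_comm]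
        congr 1
        refine Finset.prod_congr rfl fun m hm => ?_
        rw [Function.update_of_ne (Finset.mem_erase.mp hm).1]
    · refine Finset.sum_congr rfl fun s hs => Finset.prod_congr rfl fun m hm => ?_
      simp only [mem_filter] at hs
      exact Function.update_of_ne (fun h : m = j => hs.2 (h ▸ hm)) _ _
  have hfun2 : (fun t => rho n (i + 1) (Function.update l j t)) =
      fun t => (-1 : ℝ) ^ (i + 1) * (Esub n i l j * t + c0) := by
    funext t
    rw [rho, esymmF, congrFun hfun t]
  rw [pd, hfun2]
  have h : HasDerivAt (fun t : ℝ => (-1 : ℝ) ^ (i + 1) * (Esub n i l j * t + c0))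
      ((-1 : ℝ) ^ (i + 1) * (Esub n i l j * 1)) (l j) :=
    (((hasDerivAt_id (l j)).const_mul (Esub n i l j)).add_const c0).const_mul _
  rw [h.deriv, mul_one]

lemma vieta_eval {ι : Type*} [DecidableEq ι] (S : Finset ι) (f : ι → ℝ) (x : ℝ) :
    ∏ m ∈ S, (x - f m) =
      ∑ j ∈ Finset.range (S.card + 1),
        (-1) ^ j * (∑ s ∈ Finset.powersetCard j S, ∏ m ∈ s, f m) * x ^ (S.card - j) := by
  have h1 : ∏ m ∈ S, (x - f m) = ∏ m ∈ S, ((-f m) + x) := by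
    refine Finset.prod_congr rfl fun m _ => by ring
  rw [h1, Finset.prod_add]
  rw [Finset.sum_powerset S (fun t => (∏ i ∈ t, -f i) * ∏ i ∈ S \ t, x)]
  refine Finset.sum_congr rfl fun j _ => ?_
  rw [mul_assoc, Finset.sum_mul, Finset.mul_sum]
  refine Finset.sum_congr rfl fun t ht => ?_
  simp only [Finset.mem_powersetCard] at ht
  have h2 : ∏ m ∈ t, (-f m) = (-1) ^ j * ∏ m ∈ t, f m := by
    rw [← ht.2]
    rw [← Finset.prod_const (-1 : ℝ), ← Finset.prod_mul_distrib]
    exact Finset.prod_congr rfl fun m _ => by ring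
  rw [Finset.prod_const, Finset.card_sdiff_of_subset ht.1, ht.2, h2, mul_assoc]

theorem viete_jacobian_inverse (n : ℕ) (l : Fin n → ℝ) (hl : Function.Injective l)
    (JV : Matrix (Fin n) (Fin n) ℝ)
    (hJV : ∀ i j, JV i j = pd n (rho n ((i : ℕ) + 1)) l j) :
    IsUnit JV.det ∧
      ∀ i j, JV⁻¹ i j = -(l i ^ (n - 1 - (j : ℕ))) / Delta n l i := by
  classical
  set B : Matrix (Fin n) (Fin n) ℝ :=
    fun i j => -(l i ^ (n - 1 - (j : ℕ))) / Delta n l i with hB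
  have hΔ : ∀ i, Delta n l i ≠ 0 := by
    intro i
    rw [Delta]
    refine Finset.prod_ne_zero_iff.mpr fun k hk => sub_ne_zero.mpr fun h => ?_
    exact (Finset.mem_erase.mp hk).1 (hl h.symm)
  have key : ∀ i k, (∑ j : Fin n, B i j * JV j k) = if i = k then 1 else 0 := by
    intro i k
    have hn : 1 ≤ n := Nat.one_le_iff_ne_zero.mpr fun h => (h ▸ i).elim0
    have hcard : (Finset.univ.erase k).card = n - 1 := by
      rw [Finset.card_erase_of_mem (mem_univ k), Finset.card_univ, Fintype.card_fin]
    have step1 : (∑ j : Fin n, B i j * JV j k) =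
        (Delta n l i)⁻¹ * ∑ j : Fin n,
          (-1 : ℝ) ^ (j : ℕ) * Esub n (j : ℕ) l k * l i ^ (n - 1 - (j : ℕ)) := by
      rw [Finset.mul_sum]
      refine Finset.sum_congr rfl fun j _ => ?_
      rw [hJV, pd_rho, hB]
      simp only [div_eq_mul_inv]
      ring
    rw [step1]
    have step2 : (∑ j : Fin n,
        (-1 : ℝ) ^ (j : ℕ) * Esub n (j : ℕ) l k * l i ^ (n - 1 - (j : ℕ))) =
        ∏ m ∈ Finset.univ.erase k, (l i - l m) := by
      rw [Fin.sum_univ_eq_sum_range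
        (fun j => (-1 : ℝ) ^ j * Esub n j l k * l i ^ (n - 1 - j))]
      rw [vieta_eval (Finset.univ.erase k) l (l i), hcard]
      have : n - 1 + 1 = n := Nat.succ_pred_eq_of_pos hn
      rw [this]
      exact Finset.sum_congr rfl fun j _ => rfl
    rw [step2]
    by_cases hik : i = k
    · subst hik
      rw [← Delta, inv_mul_cancel₀ (hΔ i)]
      simp
    · rw [if_neg hik]
      rw [Finset.prod_eq_zero (Finset.mem_erase.mpr ⟨hik, mem_univ i⟩) (sub_self (l i))]
      exact mul_zero _
  have hBJ : B * JV = 1 := by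
    ext i k
    rw [Matrix.mul_apply, key, Matrix.one_apply]
  have hinv : JV⁻¹ = B := Matrix.inv_eq_left_inv hBJ
  refine ⟨?_, fun i j => by rw [hinv]⟩
  have hdet : JV.det * B.det = 1 := by
    rw [mul_comm, ← Matrix.det_mul, hBJ, Matrix.det_one]
  exact IsUnit.of_mul_eq_one _ hdet
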